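/- Let D ⊆ ℂ^N be a domain, μ₁ an admissible weight on D, U a bounded open set with closure contained in D, and μ₂ a weight on U. If both μ₁ and μ₂ are integrable over U, then with μ̃₁ defined as max(μ₁,μ₂) on U and μ₁ elsewhere, the spaces L²_H(D,μ₁) and L²_H(D,μ̃₁) coincide as sets and the two norms are equivalent on this space. In particular there is C > 0 with ‖f‖²_{μ̃₁} ≤ C ‖f‖²_{μ₁} for all f ∈ L²_H(D,μ₁). -/

import Mathlib

/-!
Evaluation at a point of the compact set `closure U ⊆ D` is a continuous functional on the
Hilbert space `L²_H(D, μ₁)` (complete, being closed in `L²(D, μ₁)`), and these functionals are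
pointwise bounded because every `f` is continuous on `closure U`. By Banach–Steinhaus,
`sup_U |f| ≤ M ‖f‖_{μ₁}`. On `U` we then have `|f|² max(μ₁, μ₂) ≤ |f|² μ₁ + M² ‖f‖²_{μ₁} |μ₂|`,
and integrating gives `‖f‖²_{μ̃₁} ≤ (1 + M² ∫_U |μ₂|) ‖f‖²_{μ₁}`; the reverse inequality is
`μ₁ ≤ μ̃₁`.
-/

open MeasureTheory Filter
open scoped Classical

/-- Lebesgue measure on `ℂ^N` (transported to `EuclideanSpace ℂ (Fin N)` via the
defeq with `Fin N → ℂ`). -/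
noncomputable instance {N : ℕ} : MeasureSpace (EuclideanSpace ℂ (Fin N)) :=
  { volume := (volume : Measure (Fin N → ℂ)).map (MeasurableEquiv.toLp 2 (Fin N → ℂ)) }

/-- The weighted L² norm `‖f‖_μ = (∫_D |f|² μ)^{1/2}` on a domain `D ⊆ ℂ^N`. -/
noncomputable def wnorm {N : ℕ} (D : Set (EuclideanSpace ℂ (Fin N)))
    (μ : EuclideanSpace ℂ (Fin N) → ℝ) (f : EuclideanSpace ℂ (Fin N) → ℂ) : ℝ :=
  Real.sqrt (∫ z in D, ‖f z‖ ^ 2 * μ z)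

/-- `L²_H(D,μ)`: holomorphic functions on `D` that are square-integrable against `μ`. -/
def L2H {N : ℕ} (D : Set (EuclideanSpace ℂ (Fin N)))
    (μ : EuclideanSpace ℂ (Fin N) → ℝ) : Set (EuclideanSpace ℂ (Fin N) → ℂ) :=
  {f | DifferentiableOn ℂ f D ∧ IntegrableOn (fun z => ‖f z‖ ^ 2 * μ z) D}

/-- Every point evaluation `E_z : f ↦ f(z)` is continuous on `L²_H(D,μ)`. -/
def EvalContinuous {N : ℕ} (D : Set (EuclideanSpace ℂ (Fin N)))
    (μ : EuclideanSpace ℂ (Fin N) → ℝ) : Prop :=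
  ∀ z ∈ D, ∃ C : ℝ, ∀ f ∈ L2H D μ, ‖f z‖ ≤ C * wnorm D μ f

/-- `L²_H(D,μ)` is closed in `L²(D,μ)`: any `g ∈ L²(D,μ)` that is a norm-limit of a sequence
from `L²_H(D,μ)` agrees a.e. on `D` with a member of `L²_H(D,μ)`. -/
def ClosedInL2 {N : ℕ} (D : Set (EuclideanSpace ℂ (Fin N)))
    (μ : EuclideanSpace ℂ (Fin N) → ℝ) : Prop :=
  ∀ F : ℕ → (EuclideanSpace ℂ (Fin N) → ℂ), (∀ n, F n ∈ L2H D μ) →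
    ∀ g : EuclideanSpace ℂ (Fin N) → ℂ,
      IntegrableOn (fun z => ‖g z‖ ^ 2 * μ z) D →
      Tendsto (fun n => wnorm D μ (fun z => F n z - g z)) atTop (nhds 0) →
      ∃ g' ∈ L2H D μ, ∀ᵐ z ∂(volume.restrict D), g z = g' z

/-- An admissible weight: positive and measurable, point evaluations are continuous on
`L²_H(D,μ)`, and `L²_H(D,μ)` is closed in `L²(D,μ)`. -/
def Admissible {N : ℕ} (D : Set (EuclideanSpace ℂ (Fin N)))
    (μ : EuclideanSpace ℂ (Fin N) → ℝ) : Prop :=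
  Measurable μ ∧ (∀ z ∈ D, 0 < μ z) ∧ EvalContinuous D μ ∧ ClosedInL2 D μ

namespace LinearMap

variable {𝕜 V F G : Type*} [NontriviallyNormedField 𝕜] [AddCommGroup V] [Module 𝕜 V]
  [NormedAddCommGroup F] [NormedSpace 𝕜 F] [NormedAddCommGroup G] [NormedSpace 𝕜 G]

theorem exists_continuous_comp_rangeRestrict (L : V →ₗ[𝕜] F) (ℓ : V →ₗ[𝕜] G)
    {C : ℝ} (hℓ : ∀ v, ‖ℓ v‖ ≤ C * ‖L v‖) :
    ∃ ℓ' : L.range →L[𝕜] G, ∀ v, ℓ' (L.rangeRestrict v) = ℓ v := by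
  have hker : L.ker ≤ ℓ.ker := fun v hv => by
    simpa [mem_ker.mp hv] using hℓ v
  set ℓ'' := L.ker.liftQ ℓ hker ∘ₗ L.quotKerEquivRange.symm.toLinearMap
  have hℓ'' : ∀ v, ℓ'' (L.rangeRestrict v) = ℓ v := fun v => by
    simp [ℓ'', rangeRestrict, codRestrict, quotKerEquivRange_symm_apply_image]
  refine ⟨ℓ''.mkContinuous C fun y => ?_, hℓ''⟩
  obtain ⟨v, rfl⟩ := L.surjective_rangeRestrict y
  simpa [hℓ''] using hℓ v

theorem exists_bound_of_isClosed_range [CompleteSpace F] {ι : Type*}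
    (L : V →ₗ[𝕜] F) (hL : IsClosed (L.range : Set F)) (ℓ : ι → V →ₗ[𝕜] G)
    (hℓ : ∀ i, ∃ C, ∀ v, ‖ℓ i v‖ ≤ C * ‖L v‖) (hbdd : ∀ v, ∃ B, ∀ i, ‖ℓ i v‖ ≤ B) :
    ∃ M, ∀ i v, ‖ℓ i v‖ ≤ M * ‖L v‖ := by
  have : CompleteSpace L.range := hL.completeSpace_coe
  choose C hC using hℓ
  choose ℓ' hℓ' using fun i => L.exists_continuous_comp_rangeRestrict (ℓ i) (hC i)
  obtain ⟨M, hM⟩ := banach_steinhaus (g := ℓ') fun y => by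
    obtain ⟨v, rfl⟩ := L.surjective_rangeRestrict y
    simpa only [hℓ'] using hbdd v
  refine ⟨M, fun i v => ?_⟩
  calc ‖ℓ i v‖ = ‖ℓ' i (L.rangeRestrict v)‖ := by rw [hℓ']
    _ ≤ ‖ℓ' i‖ * ‖L v‖ := (ℓ' i).le_opNorm _
    _ ≤ M * ‖L v‖ := mul_le_mul_of_nonneg_right (hM i) (norm_nonneg _)

end LinearMap

section Weighted

variable {N : ℕ} {D : Set (EuclideanSpace ℂ (Fin N))} {μ : EuclideanSpace ℂ (Fin N) → ℝ}
  {f : EuclideanSpace ℂ (Fin N) → ℂ}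

noncomputable def weightedVolume (D : Set (EuclideanSpace ℂ (Fin N)))
    (μ : EuclideanSpace ℂ (Fin N) → ℝ) : Measure (EuclideanSpace ℂ (Fin N)) :=
  (volume.restrict D).withDensity fun z => ENNReal.ofReal (μ z)

theorem lintegral_enorm_sq_weightedVolume (hμ : Measurable μ) :
    ∫⁻ z, ‖f z‖ₑ ^ 2 ∂weightedVolume D μ = ∫⁻ z in D, ENNReal.ofReal (‖f z‖ ^ 2 * μ z) := by
  rw [weightedVolume, lintegral_withDensity_eq_lintegral_mul_non_measurable _ hμ.ennreal_ofReal
    (ae_of_all _ fun _ => ENNReal.ofReal_lt_top)]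
  refine lintegral_congr fun z => ?_
  rw [Pi.mul_apply, ENNReal.ofReal_mul (sq_nonneg _), ENNReal.ofReal_pow (norm_nonneg _),
    ofReal_norm, mul_comm]

theorem wnorm_eq_toReal_eLpNorm (hD : MeasurableSet D) (hμ : Measurable μ)
    (hμ0 : ∀ z ∈ D, 0 ≤ μ z) (hf : AEStronglyMeasurable f (volume.restrict D)) :
    wnorm D μ f = (eLpNorm f 2 (weightedVolume D μ)).toReal := by
  have hnonneg : 0 ≤ᵐ[volume.restrict D] fun z => ‖f z‖ ^ 2 * μ z :=
    (ae_restrict_mem hD).mono fun z hz => mul_nonneg (sq_nonneg _) (hμ0 z hz)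
  rw [wnorm, integral_eq_lintegral_of_nonneg_ae hnonneg
      ((hf.norm.pow 2).mul hμ.aestronglyMeasurable.restrict),
    eLpNorm_eq_lintegral_rpow_enorm_toReal two_ne_zero ENNReal.ofNat_ne_top,
    ENNReal.toReal_ofNat]
  simp_rw [ENNReal.rpow_two]
  rw [lintegral_enorm_sq_weightedVolume hμ, ← ENNReal.toReal_rpow, Real.sqrt_eq_rpow, one_div]

theorem memLp_weightedVolume_iff (hD : MeasurableSet D) (hμ : Measurable μ)
    (hμ0 : ∀ z ∈ D, 0 ≤ μ z) (hf : AEStronglyMeasurable f (volume.restrict D)) :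
    MemLp f 2 (weightedVolume D μ) ↔ IntegrableOn (fun z => ‖f z‖ ^ 2 * μ z) D := by
  rw [weightedVolume,
    memLp_two_iff_integrable_sq_norm (hf.mono_ac (withDensity_absolutelyContinuous _ _)),
    integrable_withDensity_iff_integrable_smul' hμ.ennreal_ofReal
      (ae_of_all _ fun _ => ENNReal.ofReal_lt_top)]
  refine integrable_congr ((ae_restrict_mem hD).mono fun z hz => ?_)
  simp [ENNReal.toReal_ofReal (hμ0 z hz), mul_comm]

def weightedBergman (D : Set (EuclideanSpace ℂ (Fin N))) (μ : EuclideanSpace ℂ (Fin N) → ℝ) :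
    Submodule ℂ (EuclideanSpace ℂ (Fin N) → ℂ) where
  carrier := {f | DifferentiableOn ℂ f D ∧ MemLp f 2 (weightedVolume D μ)}
  add_mem' hf hg := ⟨hf.1.add hg.1, hf.2.add hg.2⟩
  zero_mem' := ⟨differentiableOn_const 0, MemLp.zero⟩
  smul_mem' c _ hf := ⟨hf.1.const_smul c, hf.2.const_smul c⟩

theorem L2H_eq_weightedBergman (hD : IsOpen D) (hμ : Measurable μ) (hμ0 : ∀ z ∈ D, 0 ≤ μ z) :
    L2H D μ = weightedBergman D μ := by
  ext f
  refine and_congr_right fun hf => (memLp_weightedVolume_iff hD.measurableSet hμ hμ0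
    (hf.continuousOn.aestronglyMeasurable hD.measurableSet)).symm

noncomputable def bergmanToLp (D : Set (EuclideanSpace ℂ (Fin N)))
    (μ : EuclideanSpace ℂ (Fin N) → ℝ) : weightedBergman D μ →ₗ[ℂ] Lp ℂ 2 (weightedVolume D μ) where
  toFun f := f.2.2.toLp f
  map_add' f g := MemLp.toLp_add f.2.2 g.2.2
  map_smul' c f := MemLp.toLp_const_smul c f.2.2

theorem norm_bergmanToLp (hD : IsOpen D) (hμ : Measurable μ) (hμ0 : ∀ z ∈ D, 0 ≤ μ z)
    (f : weightedBergman D μ) : ‖bergmanToLp D μ f‖ = wnorm D μ f := by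
  rw [wnorm_eq_toReal_eLpNorm hD.measurableSet hμ hμ0
    (f.2.1.continuousOn.aestronglyMeasurable hD.measurableSet)]
  exact Lp.norm_toLp _ f.2.2

theorem isClosed_range_bergmanToLp (hD : IsOpen D) (hμm : Measurable μ)
    (hμ0 : ∀ z ∈ D, 0 ≤ μ z) (hclosed : ClosedInL2 D μ) :
    IsClosed ((bergmanToLp D μ).range : Set (Lp ℂ 2 (weightedVolume D μ))) := by
  refine IsSeqClosed.isClosed fun y x hy hyx => ?_
  choose F hF using hy
  have hx : IntegrableOn (fun z => ‖x z‖ ^ 2 * μ z) D :=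
    (memLp_weightedVolume_iff hD.measurableSet hμm hμ0
      (Lp.stronglyMeasurable x).aestronglyMeasurable).mp (Lp.memLp x)
  have hdist : ∀ n, wnorm D μ (fun z => (F n).1 z - x z) = ‖y n - x‖ := fun n => by
    have hsub : y n - x = ((F n).2.2.sub (Lp.memLp x)).toLp _ := by
      rw [MemLp.toLp_sub (F n).2.2 (Lp.memLp x), Lp.toLp_coeFn, ← hF n]; rfl
    rw [hsub, Lp.norm_toLp]
    exact wnorm_eq_toReal_eLpNorm hD.measurableSet hμm hμ0
      (((F n).2.1.continuousOn.aestronglyMeasurable hD.measurableSet).sub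
        (Lp.stronglyMeasurable x).aestronglyMeasurable)
  obtain ⟨g, hg, hxg⟩ := hclosed (fun n => (F n).1)
    (fun n => (L2H_eq_weightedBergman hD hμm hμ0).symm.subset (F n).2) x hx
    (by simpa only [hdist] using tendsto_iff_norm_sub_tendsto_zero.mp hyx)
  rw [L2H_eq_weightedBergman hD hμm hμ0] at hg
  refine ⟨⟨g, hg⟩, ?_⟩
  conv_rhs => rw [← Lp.toLp_coeFn x (Lp.memLp x)]
  have hac : weightedVolume D μ ≪ volume.restrict D := withDensity_absolutelyContinuous _ _
  exact (MemLp.toLp_eq_toLp_iff hg.2 (Lp.memLp x)).mpr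
    (Filter.EventuallyEq.symm (hac.ae_le hxg))

theorem exists_forall_norm_le_mul_wnorm (hD : IsOpen D) (hμ : Admissible D μ)
    {K : Set (EuclideanSpace ℂ (Fin N))} (hK : IsCompact K) (hKD : K ⊆ D) :
    ∃ M, ∀ f ∈ L2H D μ, ∀ z ∈ K, ‖f z‖ ≤ M * wnorm D μ f := by
  have hμ0 : ∀ z ∈ D, 0 ≤ μ z := fun z hz => (hμ.2.1 z hz).le
  have hL2H := L2H_eq_weightedBergman hD hμ.1 hμ0
  obtain ⟨M, hM⟩ := (bergmanToLp D μ).exists_bound_of_isClosed_range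
    (isClosed_range_bergmanToLp hD hμ.1 hμ0 hμ.2.2.2)
    (fun z : K => (LinearMap.proj (z : EuclideanSpace ℂ (Fin N))).comp
      (weightedBergman D μ).subtype)
    (fun z => by
      obtain ⟨C, hC⟩ := hμ.2.2.1 z (hKD z.2)
      exact ⟨C, fun f => by
        simpa [norm_bergmanToLp hD hμ.1 hμ0] using hC f (hL2H.symm.subset f.2)⟩)
    (fun f => by
      obtain ⟨B, hB⟩ := hK.exists_bound_of_continuousOn (f.2.1.continuousOn.mono hKD)
      exact ⟨B, fun z => hB z z.2⟩)
  refine ⟨M, fun f hf z hz => ?_⟩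
  simpa [norm_bergmanToLp hD hμ.1 hμ0] using hM ⟨z, hz⟩ ⟨f, hL2H.subset hf⟩

end Weighted

section MaxWeight

variable {N : ℕ} {D U : Set (EuclideanSpace ℂ (Fin N))}
  {μ μ' μ₁ μ₂ : EuclideanSpace ℂ (Fin N) → ℝ} {f : EuclideanSpace ℂ (Fin N) → ℂ}

theorem sq_wnorm (hD : MeasurableSet D) (hμ0 : ∀ z ∈ D, 0 ≤ μ z) :
    wnorm D μ f ^ 2 = ∫ z in D, ‖f z‖ ^ 2 * μ z :=
  Real.sq_sqrt (setIntegral_nonneg hD fun z hz => mul_nonneg (sq_nonneg _) (hμ0 z hz))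

theorem L2H_subset_L2H_of_le (hD : IsOpen D) (hμ : Measurable μ) (hμ0 : ∀ z ∈ D, 0 ≤ μ z)
    (hle : ∀ z ∈ D, μ z ≤ μ' z) : L2H D μ' ⊆ L2H D μ := fun f hf => by
  have hmeas : AEStronglyMeasurable (fun z => ‖f z‖ ^ 2 * μ z) (volume.restrict D) :=
    ((hf.1.continuousOn.aestronglyMeasurable hD.measurableSet).norm.pow 2).mul
      hμ.aestronglyMeasurable.restrict
  refine ⟨hf.1, hf.2.mono' hmeas ((ae_restrict_mem hD.measurableSet).mono fun z hz => ?_)⟩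
  rw [Real.norm_of_nonneg (mul_nonneg (sq_nonneg _) (hμ0 z hz))]
  exact mul_le_mul_of_nonneg_left (hle z hz) (sq_nonneg _)

theorem wnorm_le_wnorm_of_le (hD : MeasurableSet D) (hμ0 : ∀ z ∈ D, 0 ≤ μ z)
    (hle : ∀ z ∈ D, μ z ≤ μ' z) (hf : IntegrableOn (fun z => ‖f z‖ ^ 2 * μ' z) D) :
    wnorm D μ f ≤ wnorm D μ' f := by
  refine Real.sqrt_le_sqrt (integral_mono_of_nonneg ?_ hf ?_) <;>
    filter_upwards [ae_restrict_mem hD] with z hz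
  · exact mul_nonneg (sq_nonneg _) (hμ0 z hz)
  · exact mul_le_mul_of_nonneg_left (hle z hz) (sq_nonneg _)

noncomputable def maxWeight (U : Set (EuclideanSpace ℂ (Fin N)))
    (μ₁ μ₂ : EuclideanSpace ℂ (Fin N) → ℝ) : EuclideanSpace ℂ (Fin N) → ℝ :=
  fun z => if z ∈ U then max (μ₁ z) (μ₂ z) else μ₁ z

theorem le_maxWeight (z : EuclideanSpace ℂ (Fin N)) : μ₁ z ≤ maxWeight U μ₁ μ₂ z := by
  unfold maxWeight; split_ifs <;> simp

theorem sq_mul_maxWeight_le {B : ℝ} {z : EuclideanSpace ℂ (Fin N)} (hμ₁ : 0 ≤ μ₁ z)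
    (hB : z ∈ U → ‖f z‖ ≤ B) :
    ‖f z‖ ^ 2 * maxWeight U μ₁ μ₂ z ≤
      ‖f z‖ ^ 2 * μ₁ z + U.indicator (fun z => B ^ 2 * |μ₂ z|) z := by
  by_cases hz : z ∈ U
  · have hfB : ‖f z‖ ^ 2 ≤ B ^ 2 := pow_le_pow_left₀ (norm_nonneg _) (hB hz) 2
    have hmax : max (μ₁ z) (μ₂ z) ≤ μ₁ z + |μ₂ z| :=
      max_le (le_add_of_nonneg_right (abs_nonneg _))
        ((le_abs_self _).trans (le_add_of_nonneg_left hμ₁))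
    simp only [maxWeight, hz, if_true, Set.indicator_of_mem]
    nlinarith [abs_nonneg (μ₂ z), sq_nonneg ‖f z‖]
  · simp [maxWeight, hz]

theorem mem_L2H_maxWeight (hD : IsOpen D) (hU : MeasurableSet U) (hμ₁ : Measurable μ₁)
    (hμ₂ : Measurable μ₂) (hμ₁0 : ∀ z ∈ D, 0 ≤ μ₁ z) (hμ₂int : IntegrableOn μ₂ U)
    (hf : f ∈ L2H D μ₁) {B : ℝ} (hB : ∀ z ∈ U, ‖f z‖ ≤ B) : f ∈ L2H D (maxWeight U μ₁ μ₂) := by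
  have hmajorant : IntegrableOn
      (fun z => ‖f z‖ ^ 2 * μ₁ z + U.indicator (fun z => B ^ 2 * |μ₂ z|) z) D :=
    hf.2.add (IntegrableOn.integrable_indicator (hμ₂int.abs.const_mul _) hU).integrableOn
  have hmeas : AEStronglyMeasurable (fun z => ‖f z‖ ^ 2 * maxWeight U μ₁ μ₂ z)
      (volume.restrict D) :=
    ((hf.1.continuousOn.aestronglyMeasurable hD.measurableSet).norm.pow 2).mul
      (Measurable.ite hU (hμ₁.max hμ₂) hμ₁).aestronglyMeasurable.restrict
  refine ⟨hf.1, hmajorant.mono' hmeas ?_⟩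
  filter_upwards [ae_restrict_mem hD.measurableSet] with z hz
  rw [Real.norm_of_nonneg (mul_nonneg (sq_nonneg _) ((hμ₁0 z hz).trans (le_maxWeight z)))]
  exact sq_mul_maxWeight_le (hμ₁0 z hz) (hB z)

theorem sq_wnorm_maxWeight_le (hD : MeasurableSet D) (hU : MeasurableSet U) (hUD : U ⊆ D)
    (hμ₁0 : ∀ z ∈ D, 0 ≤ μ₁ z) (hμ₂int : IntegrableOn μ₂ U)
    (hf : IntegrableOn (fun z => ‖f z‖ ^ 2 * μ₁ z) D) {B : ℝ} (hB : ∀ z ∈ U, ‖f z‖ ≤ B) :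
    wnorm D (maxWeight U μ₁ μ₂) f ^ 2 ≤ wnorm D μ₁ f ^ 2 + B ^ 2 * ∫ z in U, |μ₂ z| := by
  have hind : IntegrableOn (U.indicator fun z => B ^ 2 * |μ₂ z|) D :=
    (IntegrableOn.integrable_indicator (hμ₂int.abs.const_mul _) hU).integrableOn
  have hμ0 : ∀ z ∈ D, 0 ≤ maxWeight U μ₁ μ₂ z := fun z hz => (hμ₁0 z hz).trans (le_maxWeight z)
  calc wnorm D (maxWeight U μ₁ μ₂) f ^ 2 = ∫ z in D, ‖f z‖ ^ 2 * maxWeight U μ₁ μ₂ z :=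
        sq_wnorm hD hμ0
    _ ≤ ∫ z in D, (‖f z‖ ^ 2 * μ₁ z + U.indicator (fun z => B ^ 2 * |μ₂ z|) z) := by
        refine integral_mono_of_nonneg ?_ (hf.add hind) ?_ <;>
          filter_upwards [ae_restrict_mem hD] with z hz
        · exact mul_nonneg (sq_nonneg _) (hμ0 z hz)
        · exact sq_mul_maxWeight_le (hμ₁0 z hz) (hB z)
    _ = wnorm D μ₁ f ^ 2 + B ^ 2 * ∫ z in U, |μ₂ z| := by
        rw [integral_add hf hind, setIntegral_indicator hU, Set.inter_eq_self_of_subset_right hUD,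
          integral_const_mul, sq_wnorm hD hμ₁0]

end MaxWeight

theorem max_weight_equivalent_general {N : ℕ} (D U : Set (EuclideanSpace ℂ (Fin N)))
    (hD : IsOpen D)
    (μ₁ μ₂ : EuclideanSpace ℂ (Fin N) → ℝ)
    (hμ₁ : Admissible D μ₁)
    (hμ₂meas : Measurable μ₂)
    (hU : IsOpen U) (hUbdd : Bornology.IsBounded U) (hUcl : closure U ⊆ D)
    (hμ₂int : IntegrableOn μ₂ U) :
    L2H D μ₁ = L2H D (fun z => if z ∈ U then max (μ₁ z) (μ₂ z) else μ₁ z) ∧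
    ∃ C : ℝ, 0 < C ∧ ∀ f ∈ L2H D μ₁,
      (wnorm D μ₁ f) ^ 2 ≤ (wnorm D (fun z => if z ∈ U then max (μ₁ z) (μ₂ z) else μ₁ z) f) ^ 2 ∧
      (wnorm D (fun z => if z ∈ U then max (μ₁ z) (μ₂ z) else μ₁ z) f) ^ 2 ≤ C * (wnorm D μ₁ f) ^ 2 := by
  obtain ⟨M, hM⟩ := exists_forall_norm_le_mul_wnorm hD hμ₁ hUbdd.isCompact_closure hUcl
  obtain ⟨hμ₁meas, hμ₁pos, -⟩ := hμ₁
  have hμ₁0 : ∀ z ∈ D, 0 ≤ μ₁ z := fun z hz => (hμ₁pos z hz).le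
  have hUD : U ⊆ D := subset_closure.trans hUcl
  have hMU : ∀ f ∈ L2H D μ₁, ∀ z ∈ U, ‖f z‖ ≤ M * wnorm D μ₁ f :=
    fun f hf z hz => hM f hf z (subset_closure hz)
  have hmem : ∀ f ∈ L2H D μ₁, f ∈ L2H D (maxWeight U μ₁ μ₂) := fun f hf =>
    mem_L2H_maxWeight hD hU.measurableSet hμ₁meas hμ₂meas hμ₁0 hμ₂int hf (hMU f hf)
  refine ⟨subset_antisymm hmem (L2H_subset_L2H_of_le hD hμ₁meas hμ₁0 fun z _ => le_maxWeight z),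
    1 + M ^ 2 * ∫ z in U, |μ₂ z|, by positivity, fun f hf => ⟨?_, ?_⟩⟩
  · exact pow_le_pow_left₀ (Real.sqrt_nonneg _)
      (wnorm_le_wnorm_of_le hD.measurableSet hμ₁0 (fun z _ => le_maxWeight z) (hmem f hf).2) 2
  · calc wnorm D (maxWeight U μ₁ μ₂) f ^ 2
        ≤ wnorm D μ₁ f ^ 2 + (M * wnorm D μ₁ f) ^ 2 * ∫ z in U, |μ₂ z| :=
          sq_wnorm_maxWeight_le hD.measurableSet hU.measurableSet hUD hμ₁0 hμ₂int hf.2 (hMU f hf)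
      _ = (1 + M ^ 2 * ∫ z in U, |μ₂ z|) * wnorm D μ₁ f ^ 2 := by ring

/-- if additionally `μ₂` is integrable over `U`, then `L²_H(D,μ₁)` and
`L²_H(D,μ̃₁)` coincide as sets and the norms are equivalent; in particular
`‖f‖²_{μ̃₁} ≤ C ‖f‖²_{μ₁}` for all `f ∈ L²_H(D,μ₁)`. -/
theorem max_weight_equivalent {N : ℕ} (D U : Set (EuclideanSpace ℂ (Fin N)))
    (hD : IsOpen D) (hDconn : IsConnected D)
    (μ₁ μ₂ : EuclideanSpace ℂ (Fin N) → ℝ)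
    (hμ₁ : Admissible D μ₁)
    (hμ₂meas : Measurable μ₂) (hμ₂pos : ∀ z ∈ U, 0 < μ₂ z)
    (hU : IsOpen U) (hUbdd : Bornology.IsBounded U) (hUcl : closure U ⊆ D)
    (hμ₁int : IntegrableOn μ₁ U) (hμ₂int : IntegrableOn μ₂ U) :
    L2H D μ₁ = L2H D (fun z => if z ∈ U then max (μ₁ z) (μ₂ z) else μ₁ z) ∧
    ∃ C : ℝ, 0 < C ∧ ∀ f ∈ L2H D μ₁,
      (wnorm D μ₁ f) ^ 2 ≤ (wnorm D (fun z => if z ∈ U then max (μ₁ z) (μ₂ z) else μ₁ z) f) ^ 2 ∧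
      (wnorm D (fun z => if z ∈ U then max (μ₁ z) (μ₂ z) else μ₁ z) f) ^ 2 ≤ C * (wnorm D μ₁ f) ^ 2 :=
  max_weight_equivalent_general D U hD μ₁ μ₂ hμ₁ hμ₂meas hU hUbdd hUcl hμ₂int
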